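/- (Flat sections of the Fedosov differential; zeroth cohomology.) Let D = ∇ − δ + A· be a nilpotent Fedosov derivation (D² = 0, with A of y-degree ≥ 2 and δ^{-1}A = 0). Then for every smooth function a₀ ∈ C^∞(ℝ^d) there exists a unique a ∈ Ω⁰ with Da = 0 and σ(a) = a₀; this element τ(a₀) := a is obtained by iterating (in the y-degree) the equation a = a₀ + δ^{-1}(∇a + A·a). The resulting map τ : C^∞(ℝ^d) → {a ∈ Ω⁰ : Da = 0} is bijective, with inverse σ, and is an isomorphism of commutative algebras: τ(a₀ b₀) = τ(a₀) τ(b₀). -/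

import Mathlib

/-!
Coordinate model of the Fedosov resolution on `M = ℝ^d`, following Dolgushev,
"Covariant and equivariant formality theorems".

An element `a : Omega d` represents the exterior form with values in the formally
completed symmetric algebra of the cotangent bundle,
`a = ∑ a_{m,S}(x) y^m dx^S`, where `m` is the multi-index of exponents of the
commuting formal fibre variables `y^1, …, y^d` and `S` is the (increasingly
ordered) set of indices of the anticommuting `dx`'s; `a m S : (Fin d → ℝ) → ℝ`
is the corresponding (smooth) coefficient.
-/

noncomputable section
open scoped BigOperators

namespace FedosovModel

/-- Multi-indices: exponents of the formal fibre variables `y`. -/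
abbrev Mi (d : ℕ) := Fin d →₀ ℕ

/-- The coordinate model of `Ω(ℝ^d, 𝒮M)`: `a m S x` is the coefficient of the
monomial `y^m dx^S` (with the `dx`'s in increasing order) at the point `x`. -/
abbrev Omega (d : ℕ) := Mi d → Finset (Fin d) → (Fin d → ℝ) → ℝ

variable (d : ℕ)

/-- total `y`-degree of a multi-index -/
def ydeg (m : Mi d) : ℕ := ∑ i, m i

/-- all coefficients are smooth functions on `ℝ^d` -/
def Smooth (a : Omega d) : Prop := ∀ m S, ContDiff ℝ (⊤ : ℕ∞) (a m S)

/-- `a` is homogeneous of exterior degree `q`, i.e. `a ∈ Ω^q` -/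
def ExtDeg (q : ℕ) (a : Omega d) : Prop := ∀ m S, S.card ≠ q → a m S = 0

/-- the sign defined by `dx^i ∧ dx^S = sgn i S • dx^{S ∪ {i}}` for `i ∉ S` -/
def sgn (i : Fin d) (S : Finset (Fin d)) : ℝ :=
  (-1 : ℝ) ^ (S.filter (fun j => j < i)).card

/-- the projection `σ(a) = a|_{y = dx = 0}` -/
def sigmaOm (a : Omega d) : (Fin d → ℝ) → ℝ := a 0 ∅

/-- a function on `ℝ^d` viewed as an element of `Ω` with no `y`- and `dx`-dependence -/
def ofFun (f : (Fin d → ℝ) → ℝ) : Omega d :=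
  fun m S => if m = 0 ∧ S = ∅ then f else 0

/-- the differential `δ = dx^i ∂/∂y^i` -/
def deltaOp (a : Omega d) : Omega d := fun m S x =>
  ∑ i ∈ S, sgn d i (S.erase i) * ((m i : ℝ) + 1) *
    a (m + Finsupp.single i 1) (S.erase i) x

/-- the homotopy operator `δ⁻¹`, acting on a component of `y`-degree `p` and
exterior degree `q` with `p + q > 0` as `(p+q)⁻¹ y^k ι(∂/∂x^k)`, and as `0`
on the component `p = q = 0`. -/
def deltaInv (a : Omega d) : Omega d := fun m S x =>
  (((ydeg d m + S.card : ℕ) : ℝ))⁻¹ *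
    ∑ k : Fin d,
      if k ∉ S ∧ 1 ≤ m k then sgn d k S * a (m - Finsupp.single k 1) (insert k S) x
      else 0

/-- partial derivative `∂f/∂x^i` -/
def pd (i : Fin d) (f : (Fin d → ℝ) → ℝ) : (Fin d → ℝ) → ℝ :=
  fun x => fderiv ℝ f x (Pi.single i 1)

/-- Christoffel symbols: `Γ k i j = Γ^k_{ij}` -/
abbrev Christoffel (d : ℕ) := Fin d → Fin d → Fin d → (Fin d → ℝ) → ℝ

def SmoothGamma (Γ : Christoffel d) : Prop := ∀ k i j, ContDiff ℝ (⊤ : ℕ∞) (Γ k i j)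

def TorsionFree (Γ : Christoffel d) : Prop := ∀ k i j, Γ k i j = Γ k j i

/-- the covariant derivative `∇a = dx^i ∂a/∂x^i − dx^i Γ^k_{ij}(x) y^j ∂a/∂y^k` -/
def nablaOp (Γ : Christoffel d) (a : Omega d) : Omega d := fun m S x =>
  ∑ i ∈ S, sgn d i (S.erase i) *
    (pd d i (a m (S.erase i)) x -
      ∑ j : Fin d, ∑ k : Fin d,
        if 1 ≤ m j then
          let m' : Mi d := m + Finsupp.single k 1 - Finsupp.single j 1
          Γ k i j x * ((m' k : ℕ) : ℝ) * a m' (S.erase i) x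
        else 0)

/-- the Riemann curvature tensor
`(R_{ij})^k_l = ∂_i Γ^k_{jl} − ∂_j Γ^k_{il} + Γ^k_{im} Γ^m_{jl} − Γ^k_{jm} Γ^m_{il}` -/
def Riem (Γ : Christoffel d) (i j k l : Fin d) : (Fin d → ℝ) → ℝ := fun x =>
  pd d i (Γ k j l) x - pd d j (Γ k i l) x +
    ∑ mm : Fin d, (Γ k i mm x * Γ mm j l x - Γ k j mm x * Γ mm i l x)

/-- the curvature operator `R·a = −(1/2) dx^i dx^j (R_{ij})^k_l y^l ∂a/∂y^k` -/
def curvAct (Γ : Christoffel d) (a : Omega d) : Omega d := fun m S x =>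
  -(1/2 : ℝ) * ∑ i ∈ S, ∑ j ∈ S.erase i,
    sgn d i (S.erase i) * sgn d j ((S.erase i).erase j) *
      ∑ k : Fin d, ∑ l : Fin d,
        if 1 ≤ m l then
          let m' : Mi d := m + Finsupp.single k 1 - Finsupp.single l 1
          Riem d Γ i j k l x * ((m' k : ℕ) : ℝ) * a m' ((S.erase i).erase j) x
        else 0

/-! ### Fiberwise-vector-field-valued one-forms and the Fedosov differential -/

/-- a fiberwise-vector-field-valued one-form `B = dx^k B^j_k(x,y) ∂/∂y^j`:
`B j k m x` is the coefficient of `dx^k y^m ∂/∂y^j` -/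
abbrev VF1 (d : ℕ) := Fin d → Fin d → Mi d → (Fin d → ℝ) → ℝ

def SmoothVF1 (A : VF1 d) : Prop := ∀ j k m, ContDiff ℝ (⊤ : ℕ∞) (A j k m)

/-- all terms of `A` have `y`-degree at least 2 -/
def LowDegVanish (A : VF1 d) : Prop := ∀ j k m, ydeg d m < 2 → A j k m = 0

/-- the action of a fiberwise-vector-field-valued one-form on `Ω` as an odd
derivation: `A·a = dx^k A^j_k(x,y) ∂a/∂y^j` -/
def vact (A : VF1 d) (a : Omega d) : Omega d := fun m S x =>
  ∑ k ∈ S, sgn d k (S.erase k) *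
    ∑ j : Fin d, ∑ p ∈ Finset.HasAntidiagonal.antidiagonal m,
      A j k p.1 x * ((p.2 j : ℝ) + 1) * a (p.2 + Finsupp.single j 1) (S.erase k) x

/-- the `∂/∂y^j`-component of a fiberwise-vector-field-valued one-form,
as an element of `Ω` -/
def vf1ToOmega (A : VF1 d) (j : Fin d) : Omega d :=
  fun m S x => ∑ k : Fin d, if S = {k} then A j k m x else 0

/-- the connection one-form `Γ = −dx^i Γ^k_{ij}(x) y^j ∂/∂y^k` as a
fiberwise-vector-field-valued one-form -/
def GammaVF (Γ : Christoffel d) : VF1 d := fun jf kx m x =>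
  -∑ l : Fin d, if m = Finsupp.single l 1 then Γ jf kx l x else 0

/-- the `∂/∂y^k`-component of the curvature
`R = −(1/2) dx^i dx^j (R_{ij})^k_l y^l ∂/∂y^k`, as an element of `Ω` -/
def RVForm (Γ : Christoffel d) (kf : Fin d) : Omega d := fun m S x =>
  -(1/2 : ℝ) * ∑ i : Fin d, ∑ j : Fin d,
    (if S = {i, j} ∧ i < j then (1 : ℝ) else if S = {i, j} ∧ j < i then -1 else 0) *
      ∑ l : Fin d, if m = Finsupp.single l 1 then Riem d Γ i j kf l x else 0

/-- the normalization `δ⁻¹ A = 0` (componentwise in the fibre index) -/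
def DeltaInvVanish (A : VF1 d) : Prop := ∀ j, deltaInv d (vf1ToOmega d A j) = 0

/-- the Fedosov derivation `D = ∇ − δ + A·` -/
def Dfed (Γ : Christoffel d) (A : VF1 d) (a : Omega d) : Omega d :=
  nablaOp d Γ a - deltaOp d a + vact d A a

/-- nilpotency of the Fedosov derivation: `D ∘ D = 0` on `Ω` -/
def Nilpotent (Γ : Christoffel d) (A : VF1 d) : Prop :=
  ∀ a : Omega d, Smooth d a → Dfed d Γ A (Dfed d Γ A a) = 0

/-- the fixed-point equation `A = δ⁻¹R + δ⁻¹(∇A + (1/2)[A,A])`, componentwise in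
the fibre index `j`; here `(∇A)^j = dx^i ∂_{x^i}(A^j) + Γ·(A^j) + A·(Γ^j)` and
`((1/2)[A,A])^j = A·(A^j) = dx^k dx^l A^m_k ∂A^j_l/∂y^m`. -/
def FedosovFixedPoint (Γ : Christoffel d) (A : VF1 d) : Prop :=
  ∀ j, vf1ToOmega d A j =
    deltaInv d (RVForm d Γ j) +
      deltaInv d (nablaOp d Γ (vf1ToOmega d A j) +
        vact d A (vf1ToOmega d (GammaVF d Γ) j) +
        vact d A (vf1ToOmega d A j))

/-! ### The supercommutative product on `Ω` -/

/-- sign of `dx^S ∧ dx^T = shuffleSgn S T • dx^{S ∪ T}` for disjoint `S`, `T` -/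
def shuffleSgn (S T : Finset (Fin d)) : ℝ :=
  (-1 : ℝ) ^ ∑ i ∈ S, (T.filter (fun j => j < i)).card

/-- the supercommutative product of `Ω` -/
def mulOm (a b : Omega d) : Omega d := fun m S x =>
  ∑ T ∈ S.powerset, shuffleSgn d T (S \ T) *
    ∑ p ∈ Finset.HasAntidiagonal.antidiagonal m, a p.1 T x * b p.2 (S \ T) x

/-- `a` is the flat section of the Fedosov differential extending `a₀`:
`a ∈ Ω⁰`, `Da = 0`, `σ(a) = a₀`. -/
def IsFlatSection (Γ : Christoffel d) (A : VF1 d) (a₀ : (Fin d → ℝ) → ℝ)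
    (a : Omega d) : Prop :=
  ExtDeg d 0 a ∧ Smooth d a ∧ Dfed d Γ A a = 0 ∧ sigmaOm d a = a₀

/-!
`δ⁻¹` raises the `y`-degree by one, `∇` preserves it and `A·` does not lower it, so the
coefficient of `y^m` in `a₀ + δ⁻¹(∇a + A·a)` only involves coefficients of `a` of lower degree:
this recursion has exactly one solution `τ(a₀)`. Every flat section `a` with `σ(a) = a₀` solves
it, because `δ⁻¹δa = a − σ(a)` on `Ω⁰`. Conversely, for the solution `a` the one-form `c = Da`
satisfies `δ⁻¹c = 0`, and `δc = ∇c + A·c` because `D² = 0`; the homotopy formula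
`δ⁻¹δ + δδ⁻¹ = id` on `Ω¹` then makes `c` a solution of the recursion with `a₀ = 0`, so `c = 0`.
Multiplicativity follows from uniqueness: at each point `x`, the `dx^l`-component of `D` acts on
the `y`-series of an element of `Ω⁰` as a derivation.
-/

section RankFixedPoint
variable {ι β : Type*} (ρ : ι → ℕ)

def DependsOnLowerRank (F : (ι → β) → ι → β) : Prop :=
  ∀ ⦃b b' : ι → β⦄ ⦃i : ι⦄, (∀ j, ρ j < ρ i → b j = b' j) → F b i = F b' i

-- The value at `i` no longer changes from the `(ρ i + 1)`-st iterate on.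
def rankFix (F : (ι → β) → ι → β) (b₀ : ι → β) : ι → β := fun i => F^[ρ i + 1] b₀ i

variable {ρ} {F : (ι → β) → ι → β}

theorem DependsOnLowerRank.iterate_apply_eq (hF : DependsOnLowerRank ρ F) (b₀ : ι → β) :
    ∀ {n n' : ℕ} {i : ι}, ρ i < n → ρ i < n' → F^[n] b₀ i = F^[n'] b₀ i
  | n + 1, n' + 1, _, hn, hn' => by
    rw [Function.iterate_succ_apply', Function.iterate_succ_apply']
    exact hF fun j hj => hF.iterate_apply_eq b₀ (by omega) (by omega)

theorem DependsOnLowerRank.isFixedPt_rankFix (hF : DependsOnLowerRank ρ F) (b₀ : ι → β) :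
    Function.IsFixedPt F (rankFix ρ F b₀) := by
  funext i
  conv_rhs => rw [rankFix, Function.iterate_succ_apply']
  exact hF fun j hj => hF.iterate_apply_eq b₀ (by omega) (by omega)

theorem DependsOnLowerRank.eq_of_isFixedPt (hF : DependsOnLowerRank ρ F) {b b' : ι → β}
    (hb : Function.IsFixedPt F b) (hb' : Function.IsFixedPt F b') : b = b' := by
  have key : ∀ n i, ρ i < n → b i = b' i := by
    intro n
    induction n with
    | zero => intro i hi; omega
    | succ n ih =>
      intro i hi
      rw [← hb, ← hb']
      exact hF fun j hj => ih j (by omega)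
  exact funext fun i => key _ i (Nat.lt_succ_self _)

end RankFixedPoint

section MultiIndex
variable {d : ℕ}

theorem ydeg_eq_degree (m : Mi d) : ydeg d m = m.degree := (Finsupp.degree_eq_sum m).symm

theorem ydeg_add (m n : Mi d) : ydeg d (m + n) = ydeg d m + ydeg d n := by
  simp only [ydeg_eq_degree, map_add]

theorem ydeg_add_single (m : Mi d) (k : Fin d) :
    ydeg d (m + Finsupp.single k 1) = ydeg d m + 1 := by
  rw [ydeg_add, ydeg_eq_degree (Finsupp.single k 1), Finsupp.degree_single]

theorem ydeg_sub_single_add_one {m : Mi d} {k : Fin d} (h : 1 ≤ m k) :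
    ydeg d (m - Finsupp.single k 1) + 1 = ydeg d m := by
  rw [← ydeg_add_single, tsub_add_cancel_of_le (Finsupp.single_le_iff.mpr h)]

theorem eq_zero_of_ydeg_eq_zero {m : Mi d} (h : ydeg d m = 0) : m = 0 := by
  rwa [ydeg_eq_degree, Finsupp.degree_eq_zero_iff] at h

theorem ydeg_cast (m : Mi d) : (ydeg d m : ℝ) = ∑ k, (m k : ℝ) := by
  rw [ydeg, Nat.cast_sum]

end MultiIndex

namespace ExtDeg
variable {d q : ℕ} {a b : Omega d}

theorem add (ha : ExtDeg d q a) (hb : ExtDeg d q b) : ExtDeg d q (a + b) := fun m S hS => by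
  simp only [Pi.add_apply, ha m S hS, hb m S hS, add_zero]

theorem sub (ha : ExtDeg d q a) (hb : ExtDeg d q b) : ExtDeg d q (a - b) := fun m S hS => by
  simp only [Pi.sub_apply, ha m S hS, hb m S hS, sub_zero]

theorem ext (ha : ExtDeg d q a) (hb : ExtDeg d q b)
    (h : ∀ m S, S.card = q → a m S = b m S) : a = b := by
  funext m S
  by_cases hS : S.card = q
  · exact h m S hS
  · rw [ha m S hS, hb m S hS]

theorem apply_erase (hb : ExtDeg d q b) {S : Finset (Fin d)} (hS : S.card ≠ q + 1) {i : Fin d}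
    (hi : i ∈ S) (m : Mi d) : b m (S.erase i) = 0 :=
  hb m _ (by have := Finset.card_pos.mpr ⟨i, hi⟩; rw [Finset.card_erase_of_mem hi]; omega)

end ExtDeg

section ExteriorDegree
variable {d q : ℕ} {b : Omega d}

theorem extDeg_deltaOp (hb : ExtDeg d q b) : ExtDeg d (q + 1) (deltaOp d b) := by
  intro m S hS
  funext x
  exact Finset.sum_eq_zero fun i hi => by simp [hb.apply_erase hS hi]

theorem extDeg_nablaOp (Γ : Christoffel d) (hb : ExtDeg d q b) :
    ExtDeg d (q + 1) (nablaOp d Γ b) := by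
  intro m S hS
  funext x
  refine Finset.sum_eq_zero fun i hi => ?_
  simp [pd, hb.apply_erase hS hi]

theorem extDeg_vact (A : VF1 d) (hb : ExtDeg d q b) : ExtDeg d (q + 1) (vact d A b) := by
  intro m S hS
  funext x
  exact Finset.sum_eq_zero fun i hi => by simp [hb.apply_erase hS hi]

theorem extDeg_Dfed (Γ : Christoffel d) (A : VF1 d) (hb : ExtDeg d q b) :
    ExtDeg d (q + 1) (Dfed d Γ A b) :=
  ((extDeg_nablaOp Γ hb).sub (extDeg_deltaOp hb)).add (extDeg_vact A hb)

theorem extDeg_deltaInv {c : Omega d} (hc : ExtDeg d (q + 1) c) : ExtDeg d q (deltaInv d c) := by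
  intro m S hS
  funext x
  refine mul_eq_zero_of_right _ (Finset.sum_eq_zero fun k _ => ?_)
  split_ifs with hk
  · rw [hc _ _ (by rw [Finset.card_insert_of_notMem hk.1]; omega), Pi.zero_apply, mul_zero]
  · rfl

theorem extDeg_ofFun (f : (Fin d → ℝ) → ℝ) : ExtDeg d 0 (ofFun d f) := by
  intro m S hS
  rw [ofFun, if_neg (by rintro ⟨-, rfl⟩; exact hS rfl)]

theorem ExtDeg.mul {p : ℕ} {t u : Omega d} (ht : ExtDeg d p t) (hu : ExtDeg d q u) :
    ExtDeg d (p + q) (mulOm d t u) := by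
  intro m S hS
  funext x
  refine Finset.sum_eq_zero fun T hT => mul_eq_zero_of_right _ ?_
  by_cases hTp : T.card = p
  · have hTS := Finset.mem_powerset.mp hT
    have hST : (S \ T).card ≠ q := by
      have := Finset.card_le_card hTS
      rw [Finset.card_sdiff_of_subset hTS]; omega
    simp [hu _ _ hST]
  · simp [ht _ _ hTp]

end ExteriorDegree

section Smoothness
variable {d : ℕ} {b c : Omega d}

theorem contDiff_pd {f : (Fin d → ℝ) → ℝ} (hf : ContDiff ℝ (⊤ : ℕ∞) f) (i : Fin d) :
    ContDiff ℝ (⊤ : ℕ∞) (pd d i f) :=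
  (ContinuousLinearMap.apply ℝ ℝ (Pi.single i 1 : Fin d → ℝ)).contDiff.comp
    (hf.fderiv_right (by exact_mod_cast le_top))

theorem Smooth.add (hb : Smooth d b) (hc : Smooth d c) : Smooth d (b + c) :=
  fun m S => (hb m S).add (hc m S)

theorem smooth_ofFun {f : (Fin d → ℝ) → ℝ} (hf : ContDiff ℝ (⊤ : ℕ∞) f) :
    Smooth d (ofFun d f) := by
  intro m S
  unfold ofFun
  split_ifs
  exacts [hf, contDiff_const]

theorem smooth_nablaOp {Γ : Christoffel d} (hΓ : SmoothGamma d Γ) (hb : Smooth d b) :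
    Smooth d (nablaOp d Γ b) := by
  intro m S
  refine ContDiff.sum fun i _ => contDiff_const.mul ((contDiff_pd (hb _ _) i).sub ?_)
  refine ContDiff.sum fun j _ => ContDiff.sum fun k _ => ?_
  split_ifs
  exacts [((hΓ k i j).mul contDiff_const).mul (hb _ _), contDiff_const]

theorem smooth_vact {A : VF1 d} (hA : SmoothVF1 d A) (hb : Smooth d b) :
    Smooth d (vact d A b) := fun _ _ =>
  ContDiff.sum fun k _ => contDiff_const.mul <| ContDiff.sum fun j _ =>
    ContDiff.sum fun p _ => ((hA j k p.1).mul contDiff_const).mul (hb _ _)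

theorem smooth_deltaInv (hc : Smooth d c) : Smooth d (deltaInv d c) := by
  intro m S
  refine contDiff_const.mul (ContDiff.sum fun k _ => ?_)
  split_ifs
  exacts [contDiff_const.mul (hc _ _), contDiff_const]

end Smoothness

section Recursion
variable {d : ℕ} {Γ : Christoffel d} {A : VF1 d} {b b' c c' : Omega d} {m : Mi d}

theorem nablaOp_apply_congr (h : ∀ m', ydeg d m' ≤ ydeg d m → b m' = b' m') :
    nablaOp d Γ b m = nablaOp d Γ b' m := by
  funext S x
  refine Finset.sum_congr rfl fun i _ => ?_
  rw [h m le_rfl]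
  congr 2
  refine Finset.sum_congr rfl fun j _ => Finset.sum_congr rfl fun k _ => ?_
  split_ifs with hj
  · have hdeg := ydeg_sub_single_add_one (m := m + Finsupp.single k 1) (k := j)
      (by rw [Finsupp.add_apply]; omega)
    rw [ydeg_add_single] at hdeg
    dsimp only
    rw [h _ (by omega)]
  · rfl

theorem vact_apply_congr (hlow : LowDegVanish d A)
    (h : ∀ m', ydeg d m' ≤ ydeg d m → b m' = b' m') : vact d A b m = vact d A b' m := by
  funext S x
  refine Finset.sum_congr rfl fun k _ => congrArg _ <|
    Finset.sum_congr rfl fun j _ => Finset.sum_congr rfl fun p hp => ?_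
  by_cases hp1 : ydeg d p.1 < 2
  · simp [hlow j k p.1 hp1]
  · have hdeg := congrArg (ydeg d) (Finset.HasAntidiagonal.mem_antidiagonal.mp hp)
    rw [ydeg_add] at hdeg
    rw [h _ (by rw [ydeg_add_single]; omega)]

theorem deltaInv_apply_congr (h : ∀ m', ydeg d m' < ydeg d m → c m' = c' m') :
    deltaInv d c m = deltaInv d c' m := by
  funext S x
  refine congrArg _ (Finset.sum_congr rfl fun k _ => ?_)
  split_ifs with hk
  · rw [h _ (by have := ydeg_sub_single_add_one hk.2; omega)]
  · rfl

theorem sigmaOm_deltaInv (c : Omega d) : sigmaOm d (deltaInv d c) = 0 := by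
  funext x
  simp [sigmaOm, deltaInv]

variable (Γ A) in
def recursionMap (a₀ : (Fin d → ℝ) → ℝ) (b : Omega d) : Omega d :=
  ofFun d a₀ + deltaInv d (nablaOp d Γ b + vact d A b)

theorem dependsOnLowerRank_recursionMap (hlow : LowDegVanish d A) (a₀ : (Fin d → ℝ) → ℝ) :
    DependsOnLowerRank (ydeg d) (recursionMap Γ A a₀) := fun b b' m h => by
  simp only [recursionMap, Pi.add_apply]
  congr 1
  refine deltaInv_apply_congr fun m' hm' => ?_
  have h' : ∀ n, ydeg d n ≤ ydeg d m' → b n = b' n := fun n hn => h n (by omega)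
  simp only [Pi.add_apply, nablaOp_apply_congr h', vact_apply_congr hlow h']

theorem sigmaOm_recursionMap (a₀ : (Fin d → ℝ) → ℝ) (b : Omega d) :
    sigmaOm d (recursionMap Γ A a₀ b) = a₀ := by
  funext x
  have := congrFun (sigmaOm_deltaInv (nablaOp d Γ b + vact d A b)) x
  simp_all [recursionMap, sigmaOm, ofFun]

theorem recursionMap_zero_zero : recursionMap Γ A 0 (0 : Omega d) = 0 := by
  funext m S x
  simp [recursionMap, ofFun, deltaInv, nablaOp, vact, pd]

theorem extDeg_recursionMap (a₀ : (Fin d → ℝ) → ℝ) (hb : ExtDeg d 0 b) :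
    ExtDeg d 0 (recursionMap Γ A a₀ b) :=
  (extDeg_ofFun a₀).add (extDeg_deltaInv ((extDeg_nablaOp Γ hb).add (extDeg_vact A hb)))

theorem smooth_recursionMap (hΓ : SmoothGamma d Γ) (hA : SmoothVF1 d A)
    {a₀ : (Fin d → ℝ) → ℝ} (h₀ : ContDiff ℝ (⊤ : ℕ∞) a₀) (hb : Smooth d b) :
    Smooth d (recursionMap Γ A a₀ b) :=
  (smooth_ofFun h₀).add (smooth_deltaInv ((smooth_nablaOp hΓ hb).add (smooth_vact hA hb)))

variable (Γ A) in
def tau (a₀ : (Fin d → ℝ) → ℝ) : Omega d := rankFix (ydeg d) (recursionMap Γ A a₀) 0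

theorem isFixedPt_tau (hlow : LowDegVanish d A) (a₀ : (Fin d → ℝ) → ℝ) :
    Function.IsFixedPt (recursionMap Γ A a₀) (tau Γ A a₀) :=
  (dependsOnLowerRank_recursionMap hlow a₀).isFixedPt_rankFix 0

theorem extDeg_tau (a₀ : (Fin d → ℝ) → ℝ) : ExtDeg d 0 (tau Γ A a₀) := fun m =>
  Function.Iterate.rec (ExtDeg d 0) (f := recursionMap Γ A a₀) (fun _ _ _ => rfl)
    (fun _ => extDeg_recursionMap a₀) (ydeg d m + 1) m

theorem smooth_tau (hΓ : SmoothGamma d Γ) (hA : SmoothVF1 d A)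
    {a₀ : (Fin d → ℝ) → ℝ} (h₀ : ContDiff ℝ (⊤ : ℕ∞) a₀) : Smooth d (tau Γ A a₀) := fun m =>
  Function.Iterate.rec (Smooth d) (f := recursionMap Γ A a₀) (fun _ _ => contDiff_const)
    (fun _ => smooth_recursionMap hΓ hA h₀) (ydeg d m + 1) m

end Recursion

section Homotopy
variable {d : ℕ}

theorem sgn_empty (k : Fin d) : sgn d k ∅ = 1 := by simp [sgn]

theorem sgn_mul_self (i : Fin d) (S : Finset (Fin d)) : sgn d i S * sgn d i S = 1 := by
  rw [sgn, ← mul_pow, neg_one_mul, neg_neg, one_pow]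

theorem sgn_singleton_mul_sgn_singleton {k l : Fin d} (h : k ≠ l) :
    sgn d k {l} * sgn d l {k} = -1 := by
  rcases h.lt_or_gt with hkl | hkl <;>
    simp [sgn, Finset.filter_singleton, hkl, not_lt.mpr hkl.le]

theorem cast_sub_single_apply_add_one {m : Mi d} {k : Fin d} (h : 1 ≤ m k) :
    (((m - Finsupp.single k 1 : Mi d) k : ℕ) : ℝ) + 1 = m k := by
  rw [Finsupp.tsub_apply, Finsupp.single_eq_same, ← Nat.cast_add_one, Nat.sub_add_cancel h]

theorem deltaOp_singleton (b : Omega d) (m : Mi d) (l : Fin d) (x : Fin d → ℝ) :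
    deltaOp d b m {l} x = ((m l : ℝ) + 1) * b (m + Finsupp.single l 1) ∅ x := by
  simp [deltaOp, sgn_empty]

theorem deltaOp_pair (c : Omega d) (n : Mi d) {k l : Fin d} (hkl : k ≠ l) (x : Fin d → ℝ) :
    deltaOp d c n {k, l} x =
      sgn d k {l} * ((n k : ℝ) + 1) * c (n + Finsupp.single k 1) {l} x +
        sgn d l {k} * ((n l : ℝ) + 1) * c (n + Finsupp.single l 1) {k} x := by
  have hk : k ∉ ({l} : Finset (Fin d)) := Finset.notMem_singleton.mpr hkl
  rw [deltaOp, Finset.sum_insert hk, Finset.sum_singleton, Finset.erase_insert hk,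
    Finset.erase_insert_of_ne hkl, Finset.erase_singleton, insert_empty_eq]

theorem deltaInv_empty (c : Omega d) (m : Mi d) (x : Fin d → ℝ) :
    deltaInv d c m ∅ x = (ydeg d m : ℝ)⁻¹ *
      ∑ k, if 1 ≤ m k then c (m - Finsupp.single k 1) {k} x else 0 := by
  simp [deltaInv, sgn_empty]

theorem deltaInv_singleton (c : Omega d) (m : Mi d) (l : Fin d) (x : Fin d → ℝ) :
    deltaInv d c m {l} x = ((ydeg d m : ℝ) + 1)⁻¹ *
      ∑ k ∈ Finset.univ.erase l,
        if 1 ≤ m k then sgn d k {l} * c (m - Finsupp.single k 1) {k, l} x else 0 := by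
  rw [deltaInv, Finset.card_singleton, Nat.cast_add_one,
    ← Finset.add_sum_erase _ _ (Finset.mem_univ l),
    if_neg (by simp), zero_add]
  refine congrArg _ (Finset.sum_congr rfl fun k hk => ?_)
  simp [Finset.ne_of_mem_erase hk]

theorem deltaInv_deltaOp_of_extDeg_zero {b : Omega d} (hb : ExtDeg d 0 b) :
    deltaInv d (deltaOp d b) = b - ofFun d (sigmaOm d b) := by
  refine (extDeg_deltaInv (extDeg_deltaOp hb)).ext (hb.sub (extDeg_ofFun _)) fun m S hS => ?_
  obtain rfl := Finset.card_eq_zero.mp hS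
  funext x
  have hterm : ∀ k, (if 1 ≤ m k then deltaOp d b (m - Finsupp.single k 1) {k} x else 0) =
      (m k : ℝ) * b m ∅ x := fun k => by
    split_ifs with hk
    · rw [deltaOp_singleton, cast_sub_single_apply_add_one hk,
        tsub_add_cancel_of_le (Finsupp.single_le_iff.mpr hk)]
    · simp [Nat.lt_one_iff.mp (not_le.mp hk)]
  rw [deltaInv_empty, Finset.sum_congr rfl fun k _ => hterm k, ← Finset.sum_mul, ← ydeg_cast]
  by_cases hm : m = 0
  · subst hm
    simp [ydeg, sigmaOm, ofFun]
  · have hdeg : (ydeg d m : ℝ) ≠ 0 := Nat.cast_ne_zero.mpr (hm ∘ eq_zero_of_ydeg_eq_zero)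
    simp [inv_mul_cancel_left₀ hdeg, ofFun, hm]

theorem deltaOp_deltaInv_singleton (c : Omega d) (m : Mi d) (l : Fin d) (x : Fin d → ℝ) :
    deltaOp d (deltaInv d c) m {l} x = ((m l : ℝ) + 1) * ((ydeg d m : ℝ) + 1)⁻¹ *
      (c m {l} x + ∑ k ∈ Finset.univ.erase l,
        if 1 ≤ m k then c (m - Finsupp.single k 1 + Finsupp.single l 1) {k} x else 0) := by
  rw [deltaOp_singleton, deltaInv_empty, ydeg_add_single, Nat.cast_add_one, mul_assoc,
    ← Finset.add_sum_erase _ _ (Finset.mem_univ l)]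
  congr 3
  · simp
  · refine Finset.sum_congr rfl fun k hk => ?_
    have hkl := Finset.ne_of_mem_erase hk
    simp only [Finsupp.add_apply, Finsupp.single_eq_of_ne hkl, add_zero]
    split_ifs with h
    · rw [tsub_add_eq_add_tsub (Finsupp.single_le_iff.mpr h)]
    · rfl

theorem deltaInv_deltaOp_singleton (c : Omega d) (m : Mi d) (l : Fin d) (x : Fin d → ℝ) :
    deltaInv d (deltaOp d c) m {l} x = ((ydeg d m : ℝ) + 1)⁻¹ *
      ∑ k ∈ Finset.univ.erase l, if 1 ≤ m k then
        (m k : ℝ) * c m {l} x -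
          ((m l : ℝ) + 1) * c (m - Finsupp.single k 1 + Finsupp.single l 1) {k} x
      else 0 := by
  rw [deltaInv_singleton]
  refine congrArg _ (Finset.sum_congr rfl fun k hk => ?_)
  have hkl := Finset.ne_of_mem_erase hk
  split_ifs with h
  · rw [deltaOp_pair _ _ hkl, cast_sub_single_apply_add_one h,
      tsub_add_cancel_of_le (Finsupp.single_le_iff.mpr h), Finsupp.tsub_apply,
      Finsupp.single_eq_of_ne hkl.symm, tsub_zero]
    linear_combination (↑(m k) * c m {l} x) * sgn_mul_self k {l} +
      ((↑(m l) + 1) * c (m - Finsupp.single k 1 + Finsupp.single l 1) {k} x) *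
        sgn_singleton_mul_sgn_singleton hkl
  · rfl

theorem deltaInv_deltaOp_add_deltaOp_deltaInv {c : Omega d} (hc : ExtDeg d 1 c) :
    deltaInv d (deltaOp d c) + deltaOp d (deltaInv d c) = c := by
  refine ((extDeg_deltaInv (extDeg_deltaOp hc)).add
    (extDeg_deltaOp (extDeg_deltaInv (q := 0) hc))).ext hc fun m S hS => ?_
  obtain ⟨l, rfl⟩ := Finset.card_eq_one.mp hS
  funext x
  have hdeg : (ydeg d m : ℝ) + 1 = ∑ k ∈ Finset.univ.erase l, (m k : ℝ) + ((m l : ℝ) + 1) := by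
    rw [ydeg_cast, ← Finset.sum_erase_add _ _ (Finset.mem_univ l)]
    ring
  have hterm : ∀ k ∈ Finset.univ.erase l,
      ((if 1 ≤ m k then (m k : ℝ) * c m {l} x -
          ((m l : ℝ) + 1) * c (m - Finsupp.single k 1 + Finsupp.single l 1) {k} x else 0) +
        ((m l : ℝ) + 1) *
          (if 1 ≤ m k then c (m - Finsupp.single k 1 + Finsupp.single l 1) {k} x else 0)) =
      (m k : ℝ) * c m {l} x := fun k _ => by
    split_ifs with h
    · ring
    · simp [Nat.lt_one_iff.mp (not_le.mp h)]
  have hne : (ydeg d m : ℝ) + 1 ≠ 0 := by positivity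
  simp only [Pi.add_apply]
  rw [deltaInv_deltaOp_singleton, deltaOp_deltaInv_singleton]
  calc _ = ((ydeg d m : ℝ) + 1)⁻¹ * (∑ k ∈ Finset.univ.erase l, (m k : ℝ) * c m {l} x +
          ((m l : ℝ) + 1) * c m {l} x) := by
        rw [← Finset.sum_congr rfl hterm, Finset.sum_add_distrib, ← Finset.mul_sum]
        ring
    _ = c m {l} x := by
        rw [← Finset.sum_mul, ← add_mul, ← hdeg, inv_mul_cancel_left₀ hne]

end Homotopy

section Flat
variable {d : ℕ} {Γ : Christoffel d} {A : VF1 d} {a₀ : (Fin d → ℝ) → ℝ} {a a' : Omega d}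

theorem deltaInv_sub (u v : Omega d) : deltaInv d (u - v) = deltaInv d u - deltaInv d v := by
  funext m S x
  simp only [deltaInv, Pi.sub_apply, ← mul_sub, ← Finset.sum_sub_distrib]
  refine congrArg _ (Finset.sum_congr rfl fun k _ => ?_)
  split_ifs <;> ring

theorem deltaOp_eq_of_Dfed_eq_zero (hD : Dfed d Γ A a = 0) :
    deltaOp d a = nablaOp d Γ a + vact d A a := by
  rw [Dfed] at hD
  linear_combination -hD

theorem IsFlatSection.isFixedPt (h : IsFlatSection d Γ A a₀ a) :
    Function.IsFixedPt (recursionMap Γ A a₀) a := by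
  obtain ⟨hdeg, -, hD, hσ⟩ := h
  rw [Function.IsFixedPt, recursionMap, ← deltaOp_eq_of_Dfed_eq_zero hD,
    deltaInv_deltaOp_of_extDeg_zero hdeg, hσ, add_sub_cancel]

theorem IsFlatSection.unique (hlow : LowDegVanish d A) (h : IsFlatSection d Γ A a₀ a)
    (h' : IsFlatSection d Γ A a₀ a') : a = a' :=
  (dependsOnLowerRank_recursionMap hlow a₀).eq_of_isFixedPt h.isFixedPt h'.isFixedPt

theorem Dfed_eq_zero_of_isFixedPt (hlow : LowDegVanish d A) (hnil : Nilpotent d Γ A)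
    (hdeg : ExtDeg d 0 a) (hsm : Smooth d a) (hfix : Function.IsFixedPt (recursionMap Γ A a₀) a) :
    Dfed d Γ A a = 0 := by
  set c := Dfed d Γ A a
  have hσ : sigmaOm d a = a₀ := hfix ▸ sigmaOm_recursionMap a₀ a
  have hrec : deltaInv d (nablaOp d Γ a + vact d A a) = a - ofFun d a₀ := by
    conv_rhs => rw [← hfix, recursionMap]
    ring
  have hinv : deltaInv d c = 0 := by
    have hc : c = nablaOp d Γ a + vact d A a - deltaOp d a := by
      simp only [c, Dfed]
      ring
    rw [hc, deltaInv_sub, hrec, deltaInv_deltaOp_of_extDeg_zero hdeg, hσ, sub_sub_sub_cancel_left,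
      sub_self]
  have hδc : deltaOp d c = nablaOp d Γ c + vact d A c := deltaOp_eq_of_Dfed_eq_zero (hnil a hsm)
  have hcfix : Function.IsFixedPt (recursionMap Γ A 0) c := by
    have hδ0 : deltaOp d (0 : Omega d) = 0 := by
      funext m S x
      simp [deltaOp]
    have hof : ofFun d 0 = 0 := by
      funext m S
      simp [ofFun]
    have hc1 : ExtDeg d 1 c := extDeg_Dfed Γ A hdeg
    show recursionMap Γ A 0 c = c
    conv_rhs => rw [← deltaInv_deltaOp_add_deltaOp_deltaInv hc1]
    rw [recursionMap, ← hδc, hinv, hδ0, hof, zero_add, add_zero]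
  exact (dependsOnLowerRank_recursionMap hlow 0).eq_of_isFixedPt hcfix recursionMap_zero_zero

theorem isFlatSection_tau (hΓ : SmoothGamma d Γ) (hA : SmoothVF1 d A)
    (hlow : LowDegVanish d A) (hnil : Nilpotent d Γ A) (h₀ : ContDiff ℝ (⊤ : ℕ∞) a₀) :
    IsFlatSection d Γ A a₀ (tau Γ A a₀) :=
  have hfix := isFixedPt_tau (Γ := Γ) (A := A) hlow a₀
  ⟨extDeg_tau a₀, smooth_tau hΓ hA h₀,
    Dfed_eq_zero_of_isFixedPt hlow hnil (extDeg_tau a₀) (smooth_tau hΓ hA h₀) hfix,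
    hfix ▸ sigmaOm_recursionMap a₀ _⟩

end Flat

section Product
variable {d : ℕ} {Γ : Christoffel d} {A : VF1 d} {t u : Omega d}
open MvPowerSeries

def coeffSeries (b : Omega d) (x : Fin d → ℝ) : MvPowerSeries (Fin d) ℝ := fun m => b m ∅ x

def xDerivSeries (l : Fin d) (b : Omega d) (x : Fin d → ℝ) : MvPowerSeries (Fin d) ℝ :=
  fun m => pd d l (b m ∅) x

def vf1Series (A : VF1 d) (j l : Fin d) (x : Fin d → ℝ) : MvPowerSeries (Fin d) ℝ :=
  fun m => A j l m x

variable (Γ A) in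
/-- The part `−Γ·y·∂_y − δ + A·` of the `dx^l`-component of `D` on `Ω⁰`, at the point `x`. -/
def fiberDerivation (l : Fin d) (x : Fin d → ℝ) :
    Derivation ℝ (MvPowerSeries (Fin d) ℝ) (MvPowerSeries (Fin d) ℝ) :=
  -(∑ j, ∑ k, (C (Γ k l j x) * X j) • pderiv ℝ k) - pderiv ℝ l +
    ∑ j, vf1Series A j l x • pderiv ℝ j

variable (Γ A) in
def DfedSeries (l : Fin d) (b : Omega d) (x : Fin d → ℝ) : MvPowerSeries (Fin d) ℝ :=
  xDerivSeries l b x + fiberDerivation Γ A l x (coeffSeries b x)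

theorem coeff_coeffSeries (b : Omega d) (x : Fin d → ℝ) (m : Mi d) :
    coeff m (coeffSeries b x) = b m ∅ x := rfl

theorem coeff_xDerivSeries (l : Fin d) (b : Omega d) (x : Fin d → ℝ) (m : Mi d) :
    coeff m (xDerivSeries l b x) = pd d l (b m ∅) x := rfl

theorem coeff_vf1Series (A : VF1 d) (j l : Fin d) (x : Fin d → ℝ) (m : Mi d) :
    coeff m (vf1Series A j l x) = A j l m x := rfl

theorem derivation_sum_apply {R B M ι : Type*} [CommSemiring R] [CommSemiring B] [Algebra R B]
    [AddCommMonoid M] [Module B M] [Module R M] [IsScalarTower R B M] (s : Finset ι)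
    (D : ι → Derivation R B M) (b : B) : (∑ i ∈ s, D i) b = ∑ i ∈ s, D i b := by
  rw [← Derivation.coeFnAddMonoidHom_apply, map_sum, Finset.sum_apply]
  rfl

theorem coeff_X_mul_pderiv (φ : MvPowerSeries (Fin d) ℝ) (m : Mi d) (j k : Fin d) :
    coeff m (X j * pderiv ℝ k φ) = if 1 ≤ m j then
      let m' : Mi d := m + Finsupp.single k 1 - Finsupp.single j 1
      (m' k : ℝ) * coeff m' φ else 0 := by
  classical
  rw [X, coeff_monomial_mul, one_mul]
  simp only [Finsupp.single_le_iff]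
  split_ifs with hj
  · rw [coeff_pderiv, ← tsub_add_eq_add_tsub (Finsupp.single_le_iff.mpr hj), Finsupp.add_apply,
      Finsupp.single_eq_same, Nat.cast_add, Nat.cast_one, mul_comm]
  · rfl

theorem nablaOp_apply_singleton (b : Omega d) (m : Mi d) (l : Fin d) (x : Fin d → ℝ) :
    nablaOp d Γ b m {l} x = coeff m (xDerivSeries l b x) -
      ∑ j, ∑ k, coeff m ((C (Γ k l j x) * X j) * pderiv ℝ k (coeffSeries b x)) := by
  simp only [nablaOp, Finset.sum_singleton, Finset.erase_singleton, sgn_empty, one_mul,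
    mul_assoc, coeff_C_mul, coeff_X_mul_pderiv, mul_ite, mul_zero, coeff_coeffSeries,
    coeff_xDerivSeries]

theorem deltaOp_apply_singleton (b : Omega d) (m : Mi d) (l : Fin d) (x : Fin d → ℝ) :
    deltaOp d b m {l} x = coeff m (pderiv ℝ l (coeffSeries b x)) := by
  rw [deltaOp_singleton, coeff_pderiv, coeff_coeffSeries, mul_comm]

theorem vact_apply_singleton (b : Omega d) (m : Mi d) (l : Fin d) (x : Fin d → ℝ) :
    vact d A b m {l} x = ∑ j, coeff m (vf1Series A j l x * pderiv ℝ j (coeffSeries b x)) := by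
  simp only [vact, Finset.sum_singleton, Finset.erase_singleton, sgn_empty, one_mul, coeff_mul,
    coeff_pderiv, coeff_vf1Series, coeff_coeffSeries]
  refine Finset.sum_congr rfl fun j _ => Finset.sum_congr rfl fun p _ => ?_
  ring

theorem coeff_DfedSeries (l : Fin d) (b : Omega d) (x : Fin d → ℝ) (m : Mi d) :
    coeff m (DfedSeries Γ A l b x) = Dfed d Γ A b m {l} x := by
  simp only [Dfed, Pi.add_apply, Pi.sub_apply, nablaOp_apply_singleton, deltaOp_apply_singleton,
    vact_apply_singleton, DfedSeries, fiberDerivation, Derivation.add_apply, Derivation.sub_apply,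
    Derivation.neg_apply, derivation_sum_apply, Derivation.smul_apply, smul_eq_mul, map_add,
    map_sub, map_neg, map_sum]
  ring

theorem pd_fun_sum {ι : Type*} (s : Finset ι) {f : ι → (Fin d → ℝ) → ℝ} {x : Fin d → ℝ}
    (hf : ∀ i ∈ s, DifferentiableAt ℝ (f i) x) (l : Fin d) :
    pd d l (fun y => ∑ i ∈ s, f i y) x = ∑ i ∈ s, pd d l (f i) x := by
  rw [pd, fderiv_fun_sum hf, _root_.sum_apply]
  rfl

theorem pd_fun_mul {f g : (Fin d → ℝ) → ℝ} {x : Fin d → ℝ} (hf : DifferentiableAt ℝ f x)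
    (hg : DifferentiableAt ℝ g x) (l : Fin d) :
    pd d l (fun y => f y * g y) x = pd d l f x * g x + f x * pd d l g x := by
  simp only [pd, fderiv_fun_mul hf hg, _root_.add_apply,
    _root_.smul_apply, smul_eq_mul]
  ring

theorem mulOm_apply_empty (t u : Omega d) (m : Mi d) :
    mulOm d t u m ∅ =
      fun y => ∑ p ∈ Finset.HasAntidiagonal.antidiagonal m, t p.1 ∅ y * u p.2 ∅ y := by
  funext y
  simp [mulOm, shuffleSgn]

theorem coeffSeries_mulOm (t u : Omega d) (x : Fin d → ℝ) :
    coeffSeries (mulOm d t u) x = coeffSeries t x * coeffSeries u x := by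
  ext m
  rw [coeff_mul, coeff_coeffSeries, mulOm_apply_empty]
  rfl

theorem xDerivSeries_mulOm (ht : Smooth d t) (hu : Smooth d u) (l : Fin d) (x : Fin d → ℝ) :
    xDerivSeries l (mulOm d t u) x =
      xDerivSeries l t x * coeffSeries u x + coeffSeries t x * xDerivSeries l u x := by
  have hdiff : ∀ (b : Omega d), Smooth d b → ∀ n, DifferentiableAt ℝ (b n ∅) x :=
    fun b hb n => ((hb n ∅).differentiable (by simp)).differentiableAt
  ext m
  rw [coeff_xDerivSeries, mulOm_apply_empty,
    pd_fun_sum _ fun p _ => (hdiff t ht p.1).mul (hdiff u hu p.2), map_add, coeff_mul, coeff_mul,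
    ← Finset.sum_add_distrib]
  exact Finset.sum_congr rfl fun p _ => pd_fun_mul (hdiff t ht p.1) (hdiff u hu p.2) l

theorem DfedSeries_mulOm (ht : Smooth d t) (hu : Smooth d u) (l : Fin d) (x : Fin d → ℝ) :
    DfedSeries Γ A l (mulOm d t u) x =
      DfedSeries Γ A l t x * coeffSeries u x + coeffSeries t x * DfedSeries Γ A l u x := by
  simp only [DfedSeries, xDerivSeries_mulOm ht hu, coeffSeries_mulOm, Derivation.leibniz,
    smul_eq_mul]
  ring

theorem DfedSeries_eq_zero {b : Omega d} (hb : Dfed d Γ A b = 0) (l : Fin d) (x : Fin d → ℝ) :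
    DfedSeries Γ A l b x = 0 := by
  ext m
  rw [coeff_DfedSeries, hb]
  rfl

theorem smooth_mulOm (ht : Smooth d t) (hu : Smooth d u) : Smooth d (mulOm d t u) :=
  fun _ S => ContDiff.sum fun T _ => contDiff_const.mul <|
    ContDiff.sum fun p _ => (ht p.1 T).mul (hu p.2 (S \ T))

theorem sigmaOm_mulOm (t u : Omega d) : sigmaOm d (mulOm d t u) = sigmaOm d t * sigmaOm d u := by
  rw [sigmaOm, mulOm_apply_empty, Finsupp.antidiagonal_zero]
  simp [sigmaOm, Pi.mul_def]

theorem IsFlatSection.mul {a₀ b₀ : (Fin d → ℝ) → ℝ} (ht : IsFlatSection d Γ A a₀ t)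
    (hu : IsFlatSection d Γ A b₀ u) : IsFlatSection d Γ A (a₀ * b₀) (mulOm d t u) := by
  obtain ⟨ht0, hts, htD, htσ⟩ := ht
  obtain ⟨hu0, hus, huD, huσ⟩ := hu
  have hdeg : ExtDeg d 0 (mulOm d t u) := ht0.mul hu0
  refine ⟨hdeg, smooth_mulOm hts hus, ?_, by rw [sigmaOm_mulOm, htσ, huσ]⟩
  refine (extDeg_Dfed Γ A hdeg).ext (fun _ _ _ => rfl) fun m S hS => ?_
  obtain ⟨l, rfl⟩ := Finset.card_eq_one.mp hS
  funext x
  rw [← coeff_DfedSeries, DfedSeries_mulOm hts hus, DfedSeries_eq_zero htD,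
    DfedSeries_eq_zero huD, zero_mul, mul_zero, add_zero, map_zero]
  rfl

end Product

theorem flat_sections_tau_general (d : ℕ) (Γ : Christoffel d)
    (hΓ : SmoothGamma d Γ)
    (A : VF1 d) (hA : SmoothVF1 d A) (hlow : LowDegVanish d A)
    (hnil : Nilpotent d Γ A) :
    (∀ a₀ : (Fin d → ℝ) → ℝ, ContDiff ℝ (⊤ : ℕ∞) a₀ →
      ∃ a : Omega d,
        IsFlatSection d Γ A a₀ a ∧
        a = ofFun d a₀ + deltaInv d (nablaOp d Γ a + vact d A a) ∧
        ∀ a' : Omega d, IsFlatSection d Γ A a₀ a' → a' = a) ∧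
    (∀ τ : ((Fin d → ℝ) → ℝ) → Omega d,
      (∀ a₀, ContDiff ℝ (⊤ : ℕ∞) a₀ → IsFlatSection d Γ A a₀ (τ a₀)) →
      (∀ b : Omega d, ExtDeg d 0 b → Smooth d b → Dfed d Γ A b = 0 →
        τ (sigmaOm d b) = b) ∧
      (∀ a₀ b₀ : (Fin d → ℝ) → ℝ, ContDiff ℝ (⊤ : ℕ∞) a₀ → ContDiff ℝ (⊤ : ℕ∞) b₀ →
        τ (a₀ * b₀) = mulOm d (τ a₀) (τ b₀))) := by
  refine ⟨fun a₀ h₀ => ?_, fun τ hτ => ⟨fun b hb₀ hbs hbD => ?_, fun a₀ b₀ ha hb => ?_⟩⟩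
  · have hflat := isFlatSection_tau hΓ hA hlow hnil h₀
    exact ⟨tau Γ A a₀, hflat, (isFixedPt_tau hlow a₀).symm, fun a' ha' => ha'.unique hlow hflat⟩
  · exact (hτ _ (hbs 0 ∅)).unique hlow ⟨hb₀, hbs, hbD, rfl⟩
  · exact (hτ _ (ha.mul hb)).unique hlow ((hτ a₀ ha).mul (hτ b₀ hb))

/-- Flat sections of the Fedosov differential; zeroth cohomology.
For every smooth `a₀ ∈ C^∞(ℝ^d)` there is a unique `a ∈ Ω⁰` with `Da = 0` and
`σ(a) = a₀`; it satisfies the recursion `a = a₀ + δ⁻¹(∇a + A·a)`. The resulting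
map `τ` is bijective onto the space of `D`-flat elements of `Ω⁰`, with inverse
`σ`, and is an isomorphism of commutative algebras: `τ(a₀b₀) = τ(a₀)τ(b₀)`. -/
theorem flat_sections_tau (d : ℕ) (hd : 1 ≤ d) (Γ : Christoffel d)
    (hΓ : SmoothGamma d Γ) (hsym : TorsionFree d Γ)
    (A : VF1 d) (hA : SmoothVF1 d A) (hlow : LowDegVanish d A)
    (hdinv : DeltaInvVanish d A) (hnil : Nilpotent d Γ A) :
    (∀ a₀ : (Fin d → ℝ) → ℝ, ContDiff ℝ (⊤ : ℕ∞) a₀ →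
      ∃ a : Omega d,
        IsFlatSection d Γ A a₀ a ∧
        a = ofFun d a₀ + deltaInv d (nablaOp d Γ a + vact d A a) ∧
        ∀ a' : Omega d, IsFlatSection d Γ A a₀ a' → a' = a) ∧
    (∀ τ : ((Fin d → ℝ) → ℝ) → Omega d,
      (∀ a₀, ContDiff ℝ (⊤ : ℕ∞) a₀ → IsFlatSection d Γ A a₀ (τ a₀)) →
      (∀ b : Omega d, ExtDeg d 0 b → Smooth d b → Dfed d Γ A b = 0 →
        τ (sigmaOm d b) = b) ∧
      (∀ a₀ b₀ : (Fin d → ℝ) → ℝ, ContDiff ℝ (⊤ : ℕ∞) a₀ → ContDiff ℝ (⊤ : ℕ∞) b₀ →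
        τ (a₀ * b₀) = mulOm d (τ a₀) (τ b₀))) :=
  flat_sections_tau_general d Γ hΓ A hA hlow hnil

end FedosovModel
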